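/- Let q ≥ 2, r ≥ 2 and let v be a valuation on a field, taking values in ℚ. Suppose v(a) = (q−1)/(q^r−1), v(T) = −1, v(g_k) = 0 for 1 ≤ k ≤ r−1, and define g̃_0 = T, g̃_k = g_k + a g_{k-1}^q − a^{q^{k-1}} g̃_{k-1} for k = 1, …, r (with g_r = 1 of valuation 0, interpreting g̃_r = Δ̃). If the characteristic-q Frobenius compatibility v(x^q) = q·v(x) holds, then v(g̃_k) = (q^k − 1)/(q^r − 1) − q for all 1 ≤ k ≤ r, assuming at each step that the term of minimal valuation is unique. In particular v(g̃_k) < 0. -/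
import Mathlib

private lemma nsmul_coe_withTop (n : ℕ) (x : ℚ) :
    n • ((x : WithTop ℚ)) = ((n * x : ℚ) : WithTop ℚ) := by
  induction n with
  | zero => simp
  | succ m ih =>
      rw [succ_nsmul, ih, ← WithTop.coe_add]
      norm_cast
      push_cast
      ring

theorem target_coeff_valuations_outgoing {L : Type*} [Field L]
    (v : AddValuation L (WithTop ℚ)) (q r : ℕ) (hq : 2 ≤ q) (hr : 2 ≤ r)
    (a T : L) (g gt : ℕ → L)
    (hg0 : g 0 = T) (hgt0 : gt 0 = T) (hgr : g r = 1)
    (hva : v a = ((((q : ℚ) - 1) / ((q : ℚ) ^ r - 1) : ℚ) : WithTop ℚ))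
    (hvT : v T = ((-1 : ℚ) : WithTop ℚ))
    (hvg : ∀ k, 1 ≤ k → k ≤ r - 1 → v (g k) = (0 : ℚ))
    (hrec : ∀ k, 1 ≤ k → k ≤ r →
      gt k = g k + a * (g (k - 1)) ^ q - a ^ (q ^ (k - 1)) * gt (k - 1)) :
    ∀ k, 1 ≤ k → k ≤ r →
      v (gt k) = (((((q : ℚ) ^ k - 1) / ((q : ℚ) ^ r - 1)) - q : ℚ) : WithTop ℚ) ∧
      v (gt k) < (0 : ℚ) := by
  have hQ2 : (2:ℚ) ≤ (q:ℚ) := by exact_mod_cast hq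
  have hQ1 : (1:ℚ) < (q:ℚ) := by linarith
  have hQr : (1:ℚ) < (q:ℚ)^r := one_lt_pow₀ hQ1 (by omega)
  have hRpos : (0:ℚ) < (q:ℚ)^r - 1 := by linarith
  have hRne : ((q:ℚ)^r - 1) ≠ 0 := ne_of_gt hRpos
  have hq2r : (q:ℚ)^2 ≤ (q:ℚ)^r := pow_le_pow_right₀ (by linarith) hr
  have hqltqr : (q:ℚ) < (q:ℚ)^r := by nlinarith
  have hapos : (0:ℚ) < ((q:ℚ)-1)/((q:ℚ)^r-1) := div_pos (by linarith) hRpos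
  have halt1 : ((q:ℚ)-1)/((q:ℚ)^r-1) < 1 := by
    rw [div_lt_one hRpos]; linarith
  have hpowle : ∀ k, k ≤ r → ((q:ℚ))^k ≤ (q:ℚ)^r :=
    fun k hk => pow_le_pow_right₀ (by linarith) hk
  have hneg : ∀ k, k ≤ r → ((q:ℚ)^k - 1)/((q:ℚ)^r - 1) - q < 0 := by
    intro k hk
    have h1 : ((q:ℚ)^k - 1)/((q:ℚ)^r - 1) ≤ 1 := by
      rw [div_le_one hRpos]; linarith [hpowle k hk]
    linarith
  have main : ∀ k, 1 ≤ k → k ≤ r →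
      v (gt k) = ((((q:ℚ)^k - 1)/((q:ℚ)^r - 1) - q : ℚ) : WithTop ℚ) := by
    intro k
    induction k with
    | zero => intro h; exact absurd h (by omega)
    | succ n ih =>
      intro _ hkr
      have hrec' := hrec (n+1) (by omega) hkr
      rcases Nat.eq_zero_or_pos n with h0 | hn
      · subst h0
        simp only [Nat.add_sub_cancel, pow_zero, pow_one, hg0, hgt0] at hrec'
        have hvg1 : v (g 1) = ((0:ℚ) : WithTop ℚ) := hvg 1 le_rfl (by omega)
        have hvaTq : v (a * T ^ q) = ((((q:ℚ)-1)/((q:ℚ)^r-1) - q : ℚ) : WithTop ℚ) := by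
          rw [AddValuation.map_mul, AddValuation.map_pow, hva, hvT, nsmul_coe_withTop,
            ← WithTop.coe_add]
          congr 1; ring
        have hvaT : v (a * T) = ((((q:ℚ)-1)/((q:ℚ)^r-1) - 1 : ℚ) : WithTop ℚ) := by
          rw [AddValuation.map_mul, hva, hvT, ← WithTop.coe_add]
          congr 1; ring
        have hsum : v (g 1 + a * T ^ q) = ((((q:ℚ)-1)/((q:ℚ)^r-1) - q : ℚ) : WithTop ℚ) := by
          rw [AddValuation.map_add_eq_of_lt_right, hvaTq]
          rw [hvaTq, hvg1]
          exact_mod_cast (by linarith : ((q:ℚ)-1)/((q:ℚ)^r-1) - q < 0)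
        rw [hrec', AddValuation.map_sub_eq_of_lt_left, hsum]
        · norm_num
        · rw [hsum, hvaT]
          exact_mod_cast (by linarith :
            ((q:ℚ)-1)/((q:ℚ)^r-1) - q < ((q:ℚ)-1)/((q:ℚ)^r-1) - 1)
      · -- n ≥ 1, k = n+1
        have ihv := ih hn (by omega)
        simp only [Nat.add_sub_cancel] at hrec'
        have hvgn : v (g n) = ((0:ℚ) : WithTop ℚ) := hvg n hn (by omega)
        have hvgk : v (g (n+1)) = ((0:ℚ) : WithTop ℚ) := by
          by_cases h : n + 1 = r
          · rw [h, hgr]; simp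
          · exact hvg (n+1) (by omega) (by omega)
        have hvagq : v (a * (g n) ^ q) = ((((q:ℚ)-1)/((q:ℚ)^r-1) : ℚ) : WithTop ℚ) := by
          rw [AddValuation.map_mul, AddValuation.map_pow, hva, hvgn, nsmul_coe_withTop,
            ← WithTop.coe_add]
          congr 1; ring
        have hvthird : v (a ^ (q ^ n) * gt n)
            = ((((q:ℚ)^(n+1) - 1)/((q:ℚ)^r-1) - q : ℚ) : WithTop ℚ) := by
          rw [AddValuation.map_mul, AddValuation.map_pow, hva, ihv, nsmul_coe_withTop,
            ← WithTop.coe_add]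
          congr 1
          push_cast
          field_simp
          ring
        have hsum : v (g (n+1) + a * (g n) ^ q) = ((0:ℚ) : WithTop ℚ) := by
          rw [AddValuation.map_add_eq_of_lt_left, hvgk]
          rw [hvgk, hvagq]
          exact_mod_cast hapos
        rw [hrec', AddValuation.map_sub_eq_of_lt_right, hvthird]
        rw [hsum, hvthird]
        exact_mod_cast hneg (n+1) hkr
  intro k hk1 hkr
  refine ⟨main k hk1 hkr, ?_⟩
  rw [main k hk1 hkr]
  exact_mod_cast hneg k hkr
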